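/- Let μ be a probability measure on ℝ with finite second moment and let T : ℝ → ℝ be a nondecreasing measurable map that is square-integrable with respect to μ. Then W2²( μ , T_#μ ) = ∫ |T(x) − x|² dμ(x), and the curve γ(t) = ((1−t)·Id + t·T)_#μ is a constant-speed geodesic on [0,1]: for all 0 ≤ s ≤ t ≤ 1, W2( γ(s) , γ(t) ) = (t − s) · W2( μ , T_#μ ). -/

import Mathlib

open MeasureTheory ENNReal NNReal Filter Topology

noncomputable section

/-- A coupling of `μ` and `ν`: a measure on the product whose marginals are `μ` and `ν`. -/
def IsCoupling {E : Type*} [MeasurableSpace E] (π : Measure (E × E)) (μ ν : Measure E) : Prop :=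
  π.map Prod.fst = μ ∧ π.map Prod.snd = ν

/-- Squared 2-Wasserstein distance: infimum over couplings of `∫ |x - y|² dπ`. -/
def W2sq {E : Type*} [NormedAddCommGroup E] [MeasurableSpace E] (μ ν : Measure E) : ℝ≥0∞ :=
  ⨅ (π : Measure (E × E)) (_ : IsCoupling π μ ν), ∫⁻ p, (‖p.1 - p.2‖₊ : ℝ≥0∞) ^ 2 ∂π

/-- The 2-Wasserstein distance. -/
def W2 {E : Type*} [NormedAddCommGroup E] [MeasurableSpace E] (μ ν : Measure E) : ℝ≥0∞ :=
  W2sq μ ν ^ (1/2 : ℝ)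

/-- A measure has a finite second moment. -/
def FiniteSecondMoment {E : Type*} [NormedAddCommGroup E] [MeasurableSpace E]
    (μ : Measure E) : Prop :=
  ∫⁻ x, (‖x‖₊ : ℝ≥0∞) ^ 2 ∂μ < ∞

/-!
For `x ≤ y`, `(y - x)² / 2` is the area of the triangle `{x ≤ s < t < y}`. Integrating this over
a coupling `π` of the laws of `X` and `Y` and exchanging the order of integration gives
`E_π (X - Y)² = 2 ∫∫_{s < t} (π(X ≤ s, Y > t) + π(Y ≤ s, X > t)) ds dt`.
For a coupling of `f_#μ` and `g_#μ`, `π(X ≤ s, Y > t) ≥ μ(f ≤ s) - μ(g ≤ t)`, and when `f` and `g`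
are nondecreasing the sets `{f ≤ s}` and `{g ≤ t}` are nested, so the coupling `(f, g)_#μ` attains
this bound for every `s, t`; hence it is optimal. The interpolations `(1 - t) Id + t T` are again
nondecreasing and their pairwise displacements are `(t - s) (T - Id)`, which gives the geodesic.
-/

open Set

theorem volume_triangle {x y : ℝ} (hxy : x ≤ y) :
    volume {q : ℝ × ℝ | x ≤ q.1 ∧ q.1 < q.2 ∧ q.2 < y} = ENNReal.ofReal ((y - x) ^ 2 / 2) := by
  have h := volume_regionBetween_eq_integral (μ := volume) (f := id) (g := fun _ => y)
    (s := Icc x y) continuous_id.integrableOn_Icc (integrableOn_const measure_Icc_lt_top.ne)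
    measurableSet_Icc fun s hs => hs.2
  rw [← Measure.volume_eq_prod] at h
  convert h using 2
  · ext q
    simp only [regionBetween, mem_ofPred_eq, mem_Icc, mem_Ioo, id]
    constructor
    · rintro ⟨h1, h2, h3⟩; exact ⟨⟨h1, by linarith⟩, h2, h3⟩
    · rintro ⟨⟨h1, _⟩, h2, h3⟩; exact ⟨h1, h2, h3⟩
  · rw [integral_Icc_eq_integral_Ioc, ← intervalIntegral.integral_of_le hxy]
    simp [intervalIntegral.integral_comp_sub_left (fun s => s)]

abbrev volumeAboveDiagonal : Measure (ℝ × ℝ) := volume.restrict {q | q.1 < q.2}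

theorem volumeAboveDiagonal_Ici_prod_Iio {x y : ℝ} (hxy : x ≤ y) :
    volumeAboveDiagonal (Ici x ×ˢ Iio y) = ENNReal.ofReal ((y - x) ^ 2 / 2) := by
  rw [volumeAboveDiagonal, Measure.restrict_apply (measurableSet_Ici.prod measurableSet_Iio),
    ← volume_triangle hxy]
  congr 1
  ext q
  simp only [mem_inter_iff, mem_prod, mem_Ici, mem_Iio, mem_ofPred_eq]
  tauto

theorem volumeAboveDiagonal_Ici_prod_Iio_eq_zero {x y : ℝ} (hxy : y ≤ x) :
    volumeAboveDiagonal (Ici x ×ˢ Iio y) = 0 := by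
  rw [volumeAboveDiagonal, Measure.restrict_apply (measurableSet_Ici.prod measurableSet_Iio)]
  convert measure_empty (μ := (volume : Measure (ℝ × ℝ)))
  ext q
  simp only [mem_inter_iff, mem_prod, mem_Ici, mem_Iio, mem_ofPred_eq, mem_empty_iff_false,
    iff_false]
  intro ⟨⟨h1, h2⟩, h3⟩
  linarith

theorem sq_nnnorm_sub_eq (x y : ℝ) :
    (‖x - y‖₊ : ℝ≥0∞) ^ 2 =
      2 * (volumeAboveDiagonal (Ici x ×ˢ Iio y) + volumeAboveDiagonal (Ici y ×ˢ Iio x)) := by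
  rw [← enorm_eq_nnnorm]
  wlog hxy : x ≤ y generalizing x y
  · rw [enorm_sub_rev, add_comm]
    exact this y x (le_of_not_ge hxy)
  rw [volumeAboveDiagonal_Ici_prod_Iio hxy, volumeAboveDiagonal_Ici_prod_Iio_eq_zero hxy, add_zero,
    ← ENNReal.ofReal_ofNat 2, ← ENNReal.ofReal_mul zero_le_two, mul_div_cancel₀ _ two_ne_zero,
    Real.enorm_eq_ofReal_abs, ← ENNReal.ofReal_pow (abs_nonneg _), sq_abs,
    ← neg_sub, neg_sq]

theorem lintegral_measure_slice_comm {α β : Type*} [MeasurableSpace α] [MeasurableSpace β]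
    {μ : Measure α} {ν : Measure β} [SFinite μ] [SFinite ν] {s : Set (α × β)}
    (hs : MeasurableSet s) :
    ∫⁻ a, ν (Prod.mk a ⁻¹' s) ∂μ = ∫⁻ b, μ ((·, b) ⁻¹' s) ∂ν :=
  (Measure.prod_apply hs).symm.trans (Measure.prod_apply_symm hs)

theorem lintegral_sq_nnnorm_sub_eq (π : Measure (ℝ × ℝ)) [SFinite π] :
    ∫⁻ p, (‖p.1 - p.2‖₊ : ℝ≥0∞) ^ 2 ∂π =
      2 * (∫⁻ q, π (Iic q.1 ×ˢ Ioi q.2) ∂volumeAboveDiagonal +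
        ∫⁻ q, π (Ioi q.2 ×ˢ Iic q.1) ∂volumeAboveDiagonal) := by
  have hS₁ : MeasurableSet {r : (ℝ × ℝ) × (ℝ × ℝ) | r.1.1 ≤ r.2.1 ∧ r.2.2 < r.1.2} := by
    measurability
  have hS₂ : MeasurableSet {r : (ℝ × ℝ) × (ℝ × ℝ) | r.1.2 ≤ r.2.1 ∧ r.2.2 < r.1.1} := by
    measurability
  have h₁ : ∫⁻ p, volumeAboveDiagonal (Ici p.1 ×ˢ Iio p.2) ∂π =
      ∫⁻ q, π (Iic q.1 ×ˢ Ioi q.2) ∂volumeAboveDiagonal :=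
    lintegral_measure_slice_comm hS₁
  have h₂ : ∫⁻ p, volumeAboveDiagonal (Ici p.2 ×ˢ Iio p.1) ∂π =
      ∫⁻ q, π (Ioi q.2 ×ˢ Iic q.1) ∂volumeAboveDiagonal := by
    convert lintegral_measure_slice_comm (μ := π) (ν := volumeAboveDiagonal) hS₂ using 4
    · rfl
    · ext
      exact and_comm
  have hmeas : Measurable fun p : ℝ × ℝ => volumeAboveDiagonal (Ici p.1 ×ˢ Iio p.2) :=
    measurable_measure_prodMk_left hS₁
  simp_rw [sq_nnnorm_sub_eq]
  rw [lintegral_const_mul' _ _ ofNat_ne_top, lintegral_add_left hmeas, h₁, h₂]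

theorem IsCoupling.isFiniteMeasure {E : Type*} [MeasurableSpace E] {π : Measure (E × E)}
    {μ ν : Measure E} [IsFiniteMeasure μ] (hπ : IsCoupling π μ ν) : IsFiniteMeasure π where
  measure_univ_lt_top := by
    rw [← preimage_univ (f := Prod.fst), ← Measure.map_apply measurable_fst MeasurableSet.univ,
      hπ.1]
    exact measure_lt_top μ univ

section Coupling

variable {α E : Type*} [MeasurableSpace α] [MeasurableSpace E] {μ : Measure α} {f g : α → E}

theorem isCoupling_map_prodMk (hf : Measurable f) (hg : Measurable g) :
    IsCoupling (μ.map fun x => (f x, g x)) (μ.map f) (μ.map g) :=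
  ⟨by rw [Measure.map_map measurable_fst (hf.prodMk hg)]; rfl,
    by rw [Measure.map_map measurable_snd (hf.prodMk hg)]; rfl⟩

theorem IsCoupling.map_prodMk_prod_compl_le [IsFiniteMeasure μ] (hf : Measurable f)
    (hg : Measurable g) {π : Measure (E × E)} (hπ : IsCoupling π (μ.map f) (μ.map g))
    {A B : Set E} (hA : MeasurableSet A) (hB : MeasurableSet B)
    (hAB : f ⁻¹' A ⊆ g ⁻¹' B ∨ g ⁻¹' B ⊆ f ⁻¹' A) :
    μ.map (fun x => (f x, g x)) (A ×ˢ Bᶜ) ≤ π (A ×ˢ Bᶜ) := by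
  rw [Measure.map_apply (hf.prodMk hg) (hA.prod hB.compl), mk_preimage_prod, preimage_compl,
    ← sdiff_eq]
  rcases hAB with hAB | hBA
  · simp [sdiff_eq_empty.2 hAB]
  have hmarg : μ (f ⁻¹' A) ≤ π (A ×ˢ Bᶜ) + μ (g ⁻¹' B) := by
    rw [← Measure.map_apply hf hA, ← Measure.map_apply hg hB, ← hπ.1, ← hπ.2,
      Measure.map_apply measurable_fst hA, Measure.map_apply measurable_snd hB]
    refine (measure_mono fun p hp => ?_).trans (measure_union_le _ _)
    by_cases hpB : p.2 ∈ B
    exacts [Or.inr hpB, Or.inl ⟨hp, hpB⟩]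
  rw [measure_sdiff hBA (hg hB).nullMeasurableSet (measure_ne_top μ _)]
  exact tsub_le_iff_right.2 hmarg

end Coupling

theorem W2sq_map_map_of_monotone {α : Type*} [LinearOrder α] [MeasurableSpace α]
    (μ : Measure α) [IsFiniteMeasure μ] {f g : α → ℝ} (hf : Monotone f) (hg : Monotone g)
    (hfm : Measurable f) (hgm : Measurable g) :
    W2sq (μ.map f) (μ.map g) = ∫⁻ x, (‖f x - g x‖₊ : ℝ≥0∞) ^ 2 ∂μ := by
  have hc := isCoupling_map_prodMk (μ := μ) hfm hgm
  have hcost : ∫⁻ p, (‖p.1 - p.2‖₊ : ℝ≥0∞) ^ 2 ∂(μ.map fun x => (f x, g x)) =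
      ∫⁻ x, (‖f x - g x‖₊ : ℝ≥0∞) ^ 2 ∂μ :=
    lintegral_map (by fun_prop) (hfm.prodMk hgm)
  refine le_antisymm (hcost ▸ iInf₂_le (μ.map fun x => (f x, g x)) hc)
    (le_iInf₂ fun π hπ => ?_)
  have := hπ.isFiniteMeasure
  rw [← hcost, lintegral_sq_nnnorm_sub_eq, lintegral_sq_nnnorm_sub_eq]
  gcongr 2 * (?_ + ?_) <;> refine lintegral_mono fun q => ?_
  · rw [← compl_Iic]
    exact hπ.map_prodMk_prod_compl_le hfm hgm measurableSet_Iic measurableSet_Iic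
      (((isLowerSet_Iic _).preimage hf).total ((isLowerSet_Iic _).preimage hg))
  · rw [← compl_Ioi]
    exact hπ.map_prodMk_prod_compl_le hfm hgm measurableSet_Ioi measurableSet_Ioi
      (((isUpperSet_Ioi _).preimage hf).total ((isUpperSet_Ioi _).preimage hg))

theorem Monotone.one_sub_mul_add_mul {T : ℝ → ℝ} (hT : Monotone T) {u : ℝ} (hu₀ : 0 ≤ u)
    (hu₁ : u ≤ 1) : Monotone fun x => (1 - u) * x + u * T x := fun a b hab => by
  have : 0 ≤ 1 - u := by linarith
  dsimp only
  gcongr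
  exact hT hab

theorem lintegral_sq_nnnorm_interpolate_sub (μ : Measure ℝ) (T : ℝ → ℝ) {s t : ℝ} (hst : s ≤ t) :
    ∫⁻ x, (‖((1 - s) * x + s * T x) - ((1 - t) * x + t * T x)‖₊ : ℝ≥0∞) ^ 2 ∂μ =
      ENNReal.ofReal (t - s) ^ 2 * ∫⁻ x, (‖T x - x‖₊ : ℝ≥0∞) ^ 2 ∂μ := by
  rw [← lintegral_const_mul' _ _ (by finiteness)]
  refine lintegral_congr fun x => ?_
  rw [show (1 - s) * x + s * T x - ((1 - t) * x + t * T x) = -((t - s) * (T x - x)) by ring,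
    ← enorm_eq_nnnorm, ← enorm_eq_nnnorm, enorm_neg, enorm_mul,
    Real.enorm_eq_ofReal (sub_nonneg.2 hst), mul_pow]

theorem monotone_map_optimal_and_geodesic_general
    (μ : Measure ℝ)
    (hμ_prob : IsProbabilityMeasure μ)
    (T : ℝ → ℝ) (hT_mono : Monotone T) (hT_meas : Measurable T) :
    W2sq μ (μ.map T) = ∫⁻ x, (‖T x - x‖₊ : ℝ≥0∞) ^ 2 ∂μ ∧
    ∀ s t : ℝ, 0 ≤ s → s ≤ t → t ≤ 1 →
      W2 (μ.map fun x => (1 - s) * x + s * T x) (μ.map fun x => (1 - t) * x + t * T x) =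
        ENNReal.ofReal (t - s) * W2 μ (μ.map T) := by
  have optimal : W2sq μ (μ.map T) = ∫⁻ x, (‖T x - x‖₊ : ℝ≥0∞) ^ 2 ∂μ := by
    simpa [Measure.map_id, ← enorm_eq_nnnorm, enorm_sub_rev] using
      W2sq_map_map_of_monotone μ monotone_id hT_mono measurable_id hT_meas
  refine ⟨optimal, fun s t hs hst ht => ?_⟩
  rw [W2, W2, W2sq_map_map_of_monotone μ (hT_mono.one_sub_mul_add_mul hs (hst.trans ht))
    (hT_mono.one_sub_mul_add_mul (hs.trans hst) ht) (by fun_prop) (by fun_prop),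
    lintegral_sq_nnnorm_interpolate_sub μ T hst, optimal,
    ENNReal.mul_rpow_of_nonneg _ _ (by norm_num), ← ENNReal.rpow_natCast, ← ENNReal.rpow_mul]
  norm_num

/-- On the line, a nondecreasing map is optimal:
`W₂²(μ, T_#μ) = ∫ |T(x) - x|² dμ`, and `γ(t) = ((1-t) Id + t T)_# μ` is a constant-speed
geodesic: `W₂(γ(s), γ(t)) = (t - s) W₂(μ, T_#μ)` for `0 ≤ s ≤ t ≤ 1`. -/
theorem monotone_map_optimal_and_geodesic
    (μ : Measure ℝ)
    (hμ_prob : IsProbabilityMeasure μ) (hμ_mom : FiniteSecondMoment μ)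
    (T : ℝ → ℝ) (hT_mono : Monotone T) (hT_meas : Measurable T)
    (hT_L2 : ∫⁻ x, (‖T x‖₊ : ℝ≥0∞) ^ 2 ∂μ < ∞) :
    W2sq μ (μ.map T) = ∫⁻ x, (‖T x - x‖₊ : ℝ≥0∞) ^ 2 ∂μ ∧
    ∀ s t : ℝ, 0 ≤ s → s ≤ t → t ≤ 1 →
      W2 (μ.map fun x => (1 - s) * x + s * T x) (μ.map fun x => (1 - t) * x + t * T x) =
        ENNReal.ofReal (t - s) * W2 μ (μ.map T) :=
  monotone_map_optimal_and_geodesic_general μ hμ_prob T hT_mono hT_meas
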